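/- Let $\varphi : [0,2] \to [0,2]$ be defined by $\varphi(t) = \psi(t)$ for $t \in [0,1]$ and $\varphi(t) = \psi(2-t)$ for $t \in [1,2]$, where $\psi$ is the iterated tent map. Then for every $n \geq 1$, $0$ is the unique fixed point of $\varphi^n$ (the $n$-th iterate of $\varphi$). -/

import Mathlib

/-- The tent map on `[0,1]`. -/
noncomputable def psi0 (t : ℝ) : ℝ := if t ≤ 1 / 2 then 2 * t else 2 - 2 * t

/-- The iterated tent map `ψ : [0,1] → [0,1]`: `ψ 0 = 0` and
`ψ t = 2⁻ⁿ ψ₀(2ⁿ t - 1)` for `t ∈ [2⁻ⁿ, 2⁻ⁿ⁺¹]` (here `n = -⌊log₂ t⌋`). -/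
noncomputable def psi (t : ℝ) : ℝ :=
  if t ≤ 0 then 0
  else (2 : ℝ) ^ (⌊Real.logb 2 t⌋) * psi0 ((2 : ℝ) ^ (-⌊Real.logb 2 t⌋) * t - 1)

/-- The map `φ : [0,2] → [0,2]`, `φ t = ψ t` on `[0,1]` and `φ t = ψ (2 - t)` on
`[1,2]`. -/
noncomputable def phi (t : ℝ) : ℝ := if t ≤ 1 then psi t else psi (2 - t)

/-!
On `(0, 2]` the map `φ` lies strictly below the diagonal: writing `t = 2ᵏ u` with `u ∈ [1, 2)`,
`ψ t = 2ᵏ ψ₀ (u - 1) < 2ᵏ u = t`, and on `[1, 2]` we have `φ t = ψ (2 - t) ≤ 2 - t < t` or `φ t = 0`.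
Since `φ ≥ 0`, every orbit starting at `t > 0` satisfies `φⁿ t ≤ φ t < t`, so `0` is the only
periodic point.
-/

open Set Function

theorem Function.eq_of_iterate_eq_self {α : Type*} [Preorder α] {f : α → α} {s : Set α} {a : α}
    (hs : MapsTo f s s) (ha : f a = a) (hlt : ∀ x ∈ s, x ≠ a → f x < x) {n : ℕ} (hn : n ≠ 0)
    {x : α} (hx : x ∈ s) (hfix : f^[n] x = x) : x = a := by
  by_contra hxa
  have hle : ∀ y ∈ s, f y ≤ y := fun y hy ↦ by
    rcases eq_or_ne y a with rfl | hya
    · exact ha.le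
    · exact (hlt y hy hya).le
  have hdecr : ∀ k : ℕ, f^[k + 1] x ≤ f x := by
    intro k
    induction k with
    | zero => rfl
    | succ k ih =>
      rw [iterate_succ_apply']
      exact (hle _ (hs.iterate (k + 1) hx)).trans ih
  obtain ⟨k, rfl⟩ := Nat.exists_eq_add_one_of_ne_zero hn
  have hxfx := hdecr k
  rw [hfix] at hxfx
  exact (hlt x hx hxa).not_ge hxfx

lemma psi0_sub_one_nonneg {u : ℝ} (hu1 : 1 ≤ u) (hu2 : u ≤ 2) : 0 ≤ psi0 (u - 1) := by
  unfold psi0; split_ifs <;> linarith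

lemma psi0_sub_one_lt {u : ℝ} (hu2 : u < 2) : psi0 (u - 1) < u := by
  unfold psi0; split_ifs <;> linarith

lemma psi_of_nonpos {t : ℝ} (ht : t ≤ 0) : psi t = 0 := if_pos ht

lemma psi_eq_zpow_mul {t : ℝ} (ht : 0 < t) :
    psi t = 2 ^ Int.log 2 t * psi0 ((2 ^ Int.log 2 t)⁻¹ * t - 1) := by
  have hlog : ⌊Real.logb 2 t⌋ = Int.log 2 t := by
    exact_mod_cast Real.floor_logb_natCast (b := 2) ht.le
  rw [psi, if_neg ht.not_ge, hlog, zpow_neg]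

lemma inv_zpow_log_mul_mem_Ico {t : ℝ} (ht : 0 < t) :
    (2 ^ Int.log 2 t)⁻¹ * t ∈ Ico (1 : ℝ) 2 := by
  have hp : (0 : ℝ) < 2 ^ Int.log 2 t := by positivity
  have hlow : (2 : ℝ) ^ Int.log 2 t ≤ t := by
    exact_mod_cast Int.zpow_log_le_self (b := 2) one_lt_two ht
  have hupp : t < (2 : ℝ) ^ (Int.log 2 t + 1) := by
    exact_mod_cast Int.lt_zpow_succ_log_self (b := 2) one_lt_two t
  rw [zpow_add_one₀ two_ne_zero] at hupp
  constructor
  · rwa [le_inv_mul_iff₀ hp, mul_one]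
  · rw [inv_mul_lt_iff₀ hp]; linarith

lemma psi_nonneg (t : ℝ) : 0 ≤ psi t := by
  rcases le_or_gt t 0 with ht | ht
  · rw [psi_of_nonpos ht]
  obtain ⟨hu1, hu2⟩ := inv_zpow_log_mul_mem_Ico ht
  rw [psi_eq_zpow_mul ht]
  exact mul_nonneg (by positivity) (psi0_sub_one_nonneg hu1 hu2.le)

lemma psi_lt_self {t : ℝ} (ht : 0 < t) : psi t < t := by
  have hp : (0 : ℝ) < 2 ^ Int.log 2 t := by positivity
  calc psi t < 2 ^ Int.log 2 t * ((2 ^ Int.log 2 t)⁻¹ * t) := by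
        rw [psi_eq_zpow_mul ht]
        exact mul_lt_mul_of_pos_left (psi0_sub_one_lt (inv_zpow_log_mul_mem_Ico ht).2) hp
    _ = t := mul_inv_cancel_left₀ hp.ne' t

lemma phi_zero : phi 0 = 0 := by
  simp [phi, psi_of_nonpos]

lemma phi_nonneg (t : ℝ) : 0 ≤ phi t := by
  unfold phi; split_ifs <;> exact psi_nonneg _

lemma phi_lt_self {t : ℝ} (ht : 0 < t) : phi t < t := by
  unfold phi
  split_ifs with ht1
  · exact psi_lt_self ht
  rcases le_or_gt (2 - t) 0 with hs | hs
  · rwa [psi_of_nonpos hs]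
  · linarith [psi_lt_self hs]

theorem stmt9 : ∀ n : ℕ, 1 ≤ n → ∀ t ∈ Set.Icc (0 : ℝ) 2,
    (phi^[n] t = t ↔ t = 0) := by
  intro n hn t ht
  refine ⟨fun hfix ↦ ?_, fun ht0 ↦ ht0 ▸ iterate_fixed phi_zero n⟩
  exact eq_of_iterate_eq_self (s := Ici 0) (fun x _ ↦ phi_nonneg x) phi_zero
    (fun x hx hx0 ↦ phi_lt_self (lt_of_le_of_ne hx hx0.symm)) (by omega) ht.1 hfix
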